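/- Let A be a noetherian, locally finite, ℕ-graded prime k-algebra, and let B be a graded k-subalgebra of A such that dim_k A/B < ∞. Then A is projectively simple if and only if B is projectively simple. -/

import Mathlib

/-!
Since `B` is graded of finite codimension, `A_{≥ n} ⊆ B` for some `n`. If `I` is a nonzero
graded ideal of `B` or of `A`, then `A_{≥ n} · I · A_{≥ n}` is a graded two-sided ideal of `A`
contained in `I ∩ A_{≥ n}`, and it is nonzero because `A` is prime. Hence `A` and `B` are both
projectively simple exactly when `A` is infinite-dimensional and `A ⧸ K` is finite-dimensional
for every nonzero graded two-sided ideal `K ⊆ A_{≥ n}` of `A`.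
-/

/-- Projective simplicity of a graded subalgebra `B` of the ℕ-graded `k`-algebra `A`,
with grading `Bₙ = B ∩ Aₙ`. -/
def SubProjSimple {k A : Type*} [Field k] [Ring A] [Algebra k A]
    (𝒜 : ℕ → Submodule k A) [GradedAlgebra 𝒜] (B : Subalgebra k A) : Prop :=
  ¬ FiniteDimensional k B ∧
  ∀ I : Submodule k A, I ≤ B.toSubmodule → I ≠ ⊥ →
    (∀ b ∈ B, ∀ x ∈ I, b * x ∈ I ∧ x * b ∈ I) →
    (∀ x ∈ I, ∀ n, (DirectSum.decompose 𝒜 x n : A) ∈ I) →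
    FiniteDimensional k (↥B.toSubmodule ⧸ (I.comap B.toSubmodule.subtype))

open DirectSum SetLike

section Homogeneous

variable {ι R A : Type*} [DecidableEq ι] [AddMonoid ι] [CommSemiring R] [Semiring A]
  [Algebra R A] {𝒜 : ι → Submodule R A} [GradedAlgebra 𝒜]

theorem DirectSum.SetLike.IsHomogeneous.mul {P Q : Submodule R A} (hP : IsHomogeneous 𝒜 P)
    (hQ : IsHomogeneous 𝒜 Q) : IsHomogeneous 𝒜 (P * Q) := by
  intro i x hx
  revert i
  refine Submodule.mul_induction_on hx (fun p hp q hq i ↦ ?_) fun x y hx hy i ↦ ?_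
  · classical
    rw [decompose_mul, DirectSum.mul_eq_dfinsuppSum, DFinsupp.sum_apply, DFinsupp.sum,
      AddSubmonoidClass.coe_finsetSum]
    refine sum_mem fun j _ ↦ ?_
    rw [DFinsupp.sum_apply, DFinsupp.sum, AddSubmonoidClass.coe_finsetSum]
    refine sum_mem fun l _ ↦ ?_
    obtain rfl | h := eq_or_ne (j + l) i
    · simpa using Submodule.mul_mem_mul (hP j hp) (hQ l hq)
    · simp [DirectSum.of_apply, h]
  · simpa using add_mem (hx i) (hy i)

end Homogeneous

section Tail

variable {R A : Type*} [CommSemiring R] [Semiring A] [Algebra R A]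
  (𝒜 : ℕ → Submodule R A) [GradedAlgebra 𝒜]

-- `A_{≥ n}`, as the kernel of the projection onto `A_0 ⊕ ⋯ ⊕ A_{n-1}`
noncomputable def tailSubmodule (n : ℕ) : Submodule R A :=
  LinearMap.ker <| LinearMap.pi fun m : Fin n ↦
    DirectSum.component R ℕ (fun i ↦ 𝒜 i) m ∘ₗ (decomposeLinearEquiv 𝒜).toLinearMap

variable {𝒜}

theorem mem_tailSubmodule {n : ℕ} {x : A} :
    x ∈ tailSubmodule 𝒜 n ↔ ∀ m < n, (decompose 𝒜 x m : A) = 0 := by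
  simp [tailSubmodule, funext_iff, Fin.forall_iff, ← apply_eq_component,
    decomposeLinearEquiv_apply]

theorem mem_tailSubmodule_of_mem {n m : ℕ} (h : n ≤ m) {x : A} (hx : x ∈ 𝒜 m) :
    x ∈ tailSubmodule 𝒜 n :=
  mem_tailSubmodule.2 fun l hl ↦ decompose_of_mem_ne 𝒜 hx (by omega)

theorem tailSubmodule_antitone : Antitone (tailSubmodule 𝒜) := fun _ _ h _ hx ↦
  mem_tailSubmodule.2 fun l hl ↦ mem_tailSubmodule.1 hx l (hl.trans_le h)

theorem isHomogeneous_tailSubmodule (n : ℕ) : IsHomogeneous 𝒜 (tailSubmodule 𝒜 n) := by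
  intro i x hx
  refine mem_tailSubmodule.2 fun m hm ↦ ?_
  obtain rfl | h := eq_or_ne i m
  · rw [decompose_of_mem_same 𝒜 (decompose 𝒜 x i).2]
    exact mem_tailSubmodule.1 hx i hm
  · exact decompose_of_mem_ne 𝒜 (decompose 𝒜 x i).2 h

theorem tailSubmodule_le {n : ℕ} {P : Submodule R A} (hP : ∀ m, n ≤ m → 𝒜 m ≤ P) :
    tailSubmodule 𝒜 n ≤ P := by
  classical
  intro x hx
  rw [← sum_support_decompose 𝒜 x]
  refine sum_mem fun m _ ↦ ?_
  by_cases h : n ≤ m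
  · exact hP m h (decompose 𝒜 x m).2
  · rw [mem_tailSubmodule.1 hx m (not_le.1 h)]
    exact zero_mem P

theorem mul_mem_tailSubmodule_left {n : ℕ} (a : A) {x : A} (hx : x ∈ tailSubmodule 𝒜 n) :
    a * x ∈ tailSubmodule 𝒜 n := by
  induction a using Decomposition.inductionOn 𝒜 with
  | zero => simp
  | @homogeneous i a =>
    refine mem_tailSubmodule.2 fun m hm ↦ ?_
    rw [coe_decompose_mul_of_left_mem 𝒜 m a.2]
    split_ifs
    · rw [mem_tailSubmodule.1 hx (m - i) (by omega), mul_zero]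
    · rfl
  | add a b ha hb => rw [add_mul]; exact add_mem ha hb

theorem mul_mem_tailSubmodule_right {n : ℕ} (a : A) {x : A} (hx : x ∈ tailSubmodule 𝒜 n) :
    x * a ∈ tailSubmodule 𝒜 n := by
  induction a using Decomposition.inductionOn 𝒜 with
  | zero => simp
  | @homogeneous i a =>
    refine mem_tailSubmodule.2 fun m hm ↦ ?_
    rw [coe_decompose_mul_of_right_mem 𝒜 m a.2]
    split_ifs
    · rw [mem_tailSubmodule.1 hx (m - i) (by omega), zero_mul]
    · rfl
  | add a b ha hb => rw [mul_add]; exact add_mem ha hb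

end Tail

section TailField

variable {k A : Type*} [Field k] [Ring A] [Algebra k A] {𝒜 : ℕ → Submodule k A}
  [GradedAlgebra 𝒜]

theorem finiteDimensional_quotient_tailSubmodule [∀ n, FiniteDimensional k (𝒜 n)] (n : ℕ) :
    FiniteDimensional k (A ⧸ tailSubmodule 𝒜 n) :=
  Module.Finite.equiv (LinearMap.quotKerEquivRange _).symm

theorem tailSubmodule_ne_bot [∀ n, FiniteDimensional k (𝒜 n)] (hA : ¬FiniteDimensional k A)
    (n : ℕ) : tailSubmodule 𝒜 n ≠ ⊥ := fun h ↦ by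
  have := finiteDimensional_quotient_tailSubmodule (𝒜 := 𝒜) n
  exact hA (Module.Finite.equiv (Submodule.quotEquivOfEqBot _ h))

theorem exists_tailSubmodule_le {P : Submodule k A} (hP : IsHomogeneous 𝒜 P)
    [FiniteDimensional k (A ⧸ P)] : ∃ n, tailSubmodule 𝒜 n ≤ P := by
  -- The images of the `A_{≥ m}` in `A ⧸ P` stabilize; then `x ∈ A_m` is congruent mod `P` to
  -- some `y ∈ A_{≥ m+1}`, and the degree-`m` component of `y - x ∈ P` is `-x`.
  let images : ℕ →o (Submodule k (A ⧸ P))ᵒᵈ :=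
    ⟨fun n ↦ OrderDual.toDual ((tailSubmodule 𝒜 n).map P.mkQ),
      fun _ _ h ↦ Submodule.map_mono (tailSubmodule_antitone h)⟩
  obtain ⟨N, hN⟩ := IsArtinian.monotone_stabilizes images
  refine ⟨N, tailSubmodule_le fun m hm x hx ↦ ?_⟩
  have hstable : (tailSubmodule 𝒜 m).map P.mkQ = (tailSubmodule 𝒜 (m + 1)).map P.mkQ :=
    (hN m hm).symm.trans (hN (m + 1) (by omega))
  obtain ⟨y, hy, hyx⟩ : P.mkQ x ∈ (tailSubmodule 𝒜 (m + 1)).map P.mkQ :=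
    hstable ▸ Submodule.mem_map_of_mem (mem_tailSubmodule_of_mem le_rfl hx)
  have hcomp := hP m ((Submodule.Quotient.eq P).1 hyx)
  rwa [decompose_sub, DirectSum.sub_apply, Submodule.coe_sub,
    mem_tailSubmodule.1 hy m (by omega), decompose_of_mem_same 𝒜 hx, zero_sub,
    neg_mem_iff] at hcomp

end TailField

section Quotient

variable {k M : Type*} [Field k] [AddCommGroup M] [Module k M]

theorem finiteDimensional_iff_submodule_quotient (S : Submodule k M) :
    FiniteDimensional k M ↔ FiniteDimensional k S ∧ FiniteDimensional k (M ⧸ S) := by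
  simp only [← IsNoetherian.iff_fg, isNoetherian_iff_submodule_quotient S]

theorem finiteDimensional_quotient_iff_of_le {K P : Submodule k M} (h : K ≤ P) :
    FiniteDimensional k (M ⧸ K) ↔
      FiniteDimensional k (P ⧸ K.comap P.subtype) ∧ FiniteDimensional k (M ⧸ P) := by
  let f : P →ₗ[k] M ⧸ K := K.mkQ ∘ₗ P.subtype
  have hker : K.comap P.subtype = LinearMap.ker f := by
    rw [LinearMap.ker_comp, Submodule.ker_mkQ]
  have hrange : LinearMap.range f = P.map K.mkQ := by
    rw [LinearMap.range_comp, Submodule.range_subtype]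
  rw [finiteDimensional_iff_submodule_quotient (P.map K.mkQ)]
  exact and_congr
    (Module.Finite.equiv_iff ((Submodule.quotEquivOfEq _ _ hker).trans
      (f.quotKerEquivRange.trans (LinearEquiv.ofEq _ _ hrange)))).symm
    (Module.Finite.equiv_iff (Submodule.quotientQuotientEquivQuotient K P h))

end Quotient

section Sandwich

variable {R A : Type*} [CommSemiring R] [Semiring A] [Algebra R A]

theorem mul_mul_ne_bot_of_prime (hA : ∀ a b : A, (∀ x, a * x * b = 0) → a = 0 ∨ b = 0)
    {C I : Submodule R A} (hC : C ≠ ⊥) (hI : I ≠ ⊥) (hCl : ∀ a, ∀ c ∈ C, a * c ∈ C)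
    (hCr : ∀ a, ∀ c ∈ C, c * a ∈ C) : C * I * C ≠ ⊥ := by
  obtain ⟨c, hc, hc0⟩ := (Submodule.ne_bot_iff C).1 hC
  obtain ⟨i, hi, hi0⟩ := (Submodule.ne_bot_iff I).1 hI
  obtain ⟨x, hx⟩ : ∃ x, c * x * i ≠ 0 := by
    by_contra! h
    exact (hA c i h).elim hc0 hi0
  obtain ⟨y, hy⟩ : ∃ y, c * x * i * y * c ≠ 0 := by
    by_contra! h
    exact (hA _ c h).elim hx hc0
  refine (Submodule.ne_bot_iff _).2 ⟨c * x * i * (y * c), ?_, by rwa [← mul_assoc]⟩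
  exact Submodule.mul_mem_mul (Submodule.mul_mem_mul (hCr x c hc) hi) (hCl y c hc)

theorem mul_mem_mul_mul_of_mem {C I : Submodule R A} (hCl : ∀ a, ∀ c ∈ C, a * c ∈ C)
    (hCr : ∀ a, ∀ c ∈ C, c * a ∈ C) (a : A) {x : A} (hx : x ∈ C * I * C) :
    a * x ∈ C * I * C ∧ x * a ∈ C * I * C := by
  have hTC : ⊤ * C ≤ C := Submodule.mul_le.2 fun a _ c hc ↦ hCl a c hc
  have hCT : C * ⊤ ≤ C := Submodule.mul_le.2 fun c hc a _ ↦ hCr a c hc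
  constructor
  · have : ⊤ * (C * I * C) ≤ C * I * C := by
      rw [← mul_assoc, ← mul_assoc]
      gcongr
    exact this (Submodule.mul_mem_mul Submodule.mem_top hx)
  · have : C * I * C * ⊤ ≤ C * I * C := by
      rw [mul_assoc]
      gcongr
    exact this (Submodule.mul_mem_mul hx Submodule.mem_top)

end Sandwich

section ProjSimple

variable {k A : Type*} [Field k] [Ring A] [Algebra k A] {𝒜 : ℕ → Submodule k A}
  [GradedAlgebra 𝒜]

theorem subProjSimple_iff_of_tailSubmodule_le [∀ n, FiniteDimensional k (𝒜 n)]
    (hprime : ∀ a b : A, (∀ x, a * x * b = 0) → a = 0 ∨ b = 0) {B : Subalgebra k A}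
    [FiniteDimensional k (A ⧸ B.toSubmodule)] {n : ℕ}
    (hn : tailSubmodule 𝒜 n ≤ B.toSubmodule) :
    SubProjSimple 𝒜 B ↔ ¬FiniteDimensional k A ∧
      ∀ K : Submodule k A, K ≠ ⊥ → K ≤ tailSubmodule 𝒜 n →
        (∀ a, ∀ x ∈ K, a * x ∈ K ∧ x * a ∈ K) → IsHomogeneous 𝒜 K →
        FiniteDimensional k (A ⧸ K) := by
  have hfin : FiniteDimensional k B ↔ FiniteDimensional k A := by
    rw [finiteDimensional_iff_submodule_quotient B.toSubmodule,
      ← Subalgebra.finiteDimensional_toSubmodule]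
    exact ⟨fun h ↦ ⟨h, inferInstance⟩, And.left⟩
  refine ⟨fun ⟨hBinf, hBideals⟩ ↦ ⟨hfin.not.1 hBinf, fun K hK hKn hKA hKgr ↦ ?_⟩,
    fun ⟨hAinf, hAideals⟩ ↦ ⟨hfin.not.2 hAinf, fun I hIB hI hIBI hIgr ↦ ?_⟩⟩
  · refine (finiteDimensional_quotient_iff_of_le (hKn.trans hn)).2 ⟨?_, inferInstance⟩
    exact hBideals K (hKn.trans hn) hK (fun b _ x hx ↦ hKA b x hx) fun x hx m ↦ hKgr m hx
  · set C := tailSubmodule 𝒜 n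
    have hCl : ∀ a, ∀ c ∈ C, a * c ∈ C := fun a _ ↦ mul_mem_tailSubmodule_left a
    have hCr : ∀ a, ∀ c ∈ C, c * a ∈ C := fun a _ ↦ mul_mem_tailSubmodule_right a
    have hIhom : IsHomogeneous 𝒜 I := fun m _ hx ↦ hIgr _ hx m
    have hCI : C * I ≤ I := Submodule.mul_le.2 fun c hc x hx ↦ (hIBI c (hn hc) x hx).1
    have hKI : C * I * C ≤ I :=
      Submodule.mul_le.2 fun u hu c hc ↦ (hIBI c (hn hc) u (hCI hu)).2
    have hKC : C * I * C ≤ C := Submodule.mul_le.2 fun u _ c hc ↦ hCl u c hc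
    have hK : FiniteDimensional k (A ⧸ C * I * C) :=
      hAideals _ (mul_mul_ne_bot_of_prime hprime (tailSubmodule_ne_bot hAinf n) hI hCl hCr) hKC
        (fun a _ hx ↦ mul_mem_mul_mul_of_mem hCl hCr a hx)
        (((isHomogeneous_tailSubmodule n).mul hIhom).mul (isHomogeneous_tailSubmodule n))
    have : FiniteDimensional k (A ⧸ I) :=
      Module.Finite.of_surjective _ (Submodule.factor_surjective hKI)
    exact ((finiteDimensional_quotient_iff_of_le hIB).1 this).1

end ProjSimple

theorem projectively_simple_iff_finite_codim_subalgebra_general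
    (k : Type*) [Field k] {A : Type*} [Ring A] [Algebra k A]
    (𝒜 : ℕ → Submodule k A) [GradedAlgebra 𝒜]
    (hlf : ∀ n, FiniteDimensional k (𝒜 n))
    (hprime : ∀ a b : A, (∀ x : A, a * x * b = 0) → a = 0 ∨ b = 0)
    (B : Subalgebra k A)
    (hBgraded : ∀ x ∈ B, ∀ n, (DirectSum.decompose 𝒜 x n : A) ∈ B)
    (hcodim : FiniteDimensional k (A ⧸ B.toSubmodule)) :
    SubProjSimple 𝒜 ⊤ ↔ SubProjSimple 𝒜 B := by
  obtain ⟨n, hn⟩ := exists_tailSubmodule_le (P := B.toSubmodule) fun m x hx ↦ hBgraded x hx m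
  have : FiniteDimensional k (A ⧸ (⊤ : Subalgebra k A).toSubmodule) := by
    rw [Algebra.top_toSubmodule]
    infer_instance
  rw [subProjSimple_iff_of_tailSubmodule_le hprime le_top,
    subProjSimple_iff_of_tailSubmodule_le hprime hn]

theorem projectively_simple_iff_finite_codim_subalgebra
    (k : Type*) [Field k] {A : Type*} [Ring A] [Algebra k A]
    (𝒜 : ℕ → Submodule k A) [GradedAlgebra 𝒜]
    (hlf : ∀ n, FiniteDimensional k (𝒜 n))
    (hNoethA : IsNoetherianRing A) (hNoethAop : IsNoetherianRing Aᵐᵒᵖ)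
    (hprime : ∀ a b : A, (∀ x : A, a * x * b = 0) → a = 0 ∨ b = 0)
    (B : Subalgebra k A)
    (hBgraded : ∀ x ∈ B, ∀ n, (DirectSum.decompose 𝒜 x n : A) ∈ B)
    (hcodim : FiniteDimensional k (A ⧸ B.toSubmodule)) :
    SubProjSimple 𝒜 ⊤ ↔ SubProjSimple 𝒜 B :=
  projectively_simple_iff_finite_codim_subalgebra_general k 𝒜 hlf hprime B hBgraded hcodim
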